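/- arXiv:0707.0537 — 3 statements merged into one kernel-verified Lean document; each statement's English description precedes it below -/
import Mathlib

section
/- Let δ, δ' ≥ 2 be real numbers and fix x ∈ ℝ. Suppose (m_n)_{n∈ℕ} is a family of differentiable functions m_n : [0,∞) → ℝ with m_0(t) = 1 for all t ≥ 0, m_n(0) = x^n, and m_n'(t) = −a_n m_n(t) + c_n(δ') m_{n−1}(t) for all n ≥ 1 and t ≥ 0. Then for all n ∈ ℕ and t ≥ 0: m_n(t) = e^{−a_n t} x^n + Σ_{k=1}^{n} c_n(δ') c_{n−1}(δ') ⋯ c_{n−k+1}(δ') · B_t(a_n, a_{n−1}, …, a_{n−k}) · x^{n−k}, and moreover each coefficient c_n(δ') ⋯ c_{n−k+1}(δ') · B_t(a_n, …, a_{n−k}) is nonnegative for every t ≥ 0. -/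
open Finset Real

/-- `aC δ δ' n = n (2(n-1) + δ + δ')`. -/
noncomputable def aC (δ δ' : ℝ) (n : ℕ) : ℝ := (n : ℝ) * (2 * ((n : ℝ) - 1) + δ + δ')

/-- `cC γ n = n (2(n-1) + γ)`. -/
noncomputable def cC (γ : ℝ) (n : ℕ) : ℝ := (n : ℝ) * (2 * ((n : ℝ) - 1) + γ)

/-- `Bt t k b = B_t(b 0, …, b k)`. -/
noncomputable def Bt (t : ℝ) (k : ℕ) (b : ℕ → ℝ) : ℝ :=
  (-1 : ℝ) ^ k * ∑ j ∈ Finset.range (k + 1),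
    (-1 : ℝ) ^ j * Real.exp (-(b j) * t) /
      ∏ l ∈ (Finset.range (k + 1)).erase j, |b j - b l|

/-!
Up to sign, `B_t(b_0, …, b_k) = (-1)^k ∑_j e^{-b_j t} / ∏_{l ≠ j} (b_j - b_l)` is the divided
difference of `s ↦ e^{-s t}` at the nodes `b_0, …, b_k`. For `k ≥ 1` it vanishes at `t = 0`
(the divided difference of a constant), and it satisfies
`∂_t B_t(b_0, …, b_k) = -b_0 B_t(b_0, …, b_k) + B_t(b_1, …, b_k)`. Hence the claimed expression
solves the same triangular linear system as `m`, with the same initial values, and the two agree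
by induction on `n`, uniqueness for `f' = -a f + g` coming from the integrating factor `e^{a t}`.
The same integrating factor and induction on `k` give `B_t ≥ 0` for `t ≥ 0`.
-/

theorem nonneg_of_hasDerivAt_linear {f g : ℝ → ℝ} {a : ℝ}
    (hf : ∀ t, 0 ≤ t → HasDerivAt f (-a * f t + g t) t) (hg : ∀ t, 0 ≤ t → 0 ≤ g t)
    (hf0 : 0 ≤ f 0) {t : ℝ} (ht : 0 ≤ t) : 0 ≤ f t := by
  set u : ℝ → ℝ := fun s => exp (a * s) * f s
  have hu : ∀ s, 0 ≤ s → HasDerivAt u (exp (a * s) * g s) s := fun s hs => by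
    have he : HasDerivAt (fun s => exp (a * s)) (exp (a * s) * a) s := by
      simpa using ((hasDerivAt_id s).const_mul a).exp
    exact (he.mul (hf s hs)).congr_deriv (by ring)
  have hmono : MonotoneOn u (Set.Ici 0) := by
    refine monotoneOn_of_hasDerivWithinAt_nonneg (f' := fun s => exp (a * s) * g s) (convex_Ici 0)
      (fun s hs => (hu s hs).continuousAt.continuousWithinAt) (fun s hs => ?_) (fun s hs => ?_)
    all_goals rw [interior_Ici] at hs
    · exact (hu s hs.le).hasDerivWithinAt
    · exact mul_nonneg (exp_pos _).le (hg s hs.le)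
  have hut : f 0 ≤ u t := by simpa [u] using hmono Set.self_mem_Ici ht ht
  exact nonneg_of_mul_nonneg_right (hf0.trans hut) (exp_pos _)

theorem eq_of_hasDerivAt_linear {f₁ f₂ g : ℝ → ℝ} {a : ℝ}
    (hf₁ : ∀ t, 0 ≤ t → HasDerivAt f₁ (-a * f₁ t + g t) t)
    (hf₂ : ∀ t, 0 ≤ t → HasDerivAt f₂ (-a * f₂ t + g t) t)
    (h0 : f₁ 0 = f₂ 0) {t : ℝ} (ht : 0 ≤ t) : f₁ t = f₂ t := by
  have hsub_nonneg : ∀ {f f' : ℝ → ℝ}, (∀ t, 0 ≤ t → HasDerivAt f (-a * f t + g t) t) →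
      (∀ t, 0 ≤ t → HasDerivAt f' (-a * f' t + g t) t) → f 0 = f' 0 → 0 ≤ f t - f' t :=
    fun hf hf' h0 => nonneg_of_hasDerivAt_linear (g := 0)
      (fun s hs => ((hf s hs).sub (hf' s hs)).congr_deriv (by simp; ring))
      (fun _ _ => le_rfl) (by simp [h0]) ht
  linarith [hsub_nonneg hf₁ hf₂ h0, hsub_nonneg hf₂ hf₁ h0.symm]

theorem Finset.prod_range_succ_erase_succ {M : Type*} [CommMonoid M] (g : ℕ → M) (k j : ℕ) :
    ∏ l ∈ (range (k + 1)).erase (j + 1), g l = g 0 * ∏ l ∈ (range k).erase j, g (l + 1) := by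
  simp only [← filter_ne', prod_filter, prod_range_succ', add_left_inj, ne_eq,
    not_false_eq_true, if_true, Nat.zero_ne_add_one]
  rw [mul_comm]

theorem prod_erase_sub_eq_neg_one_pow_mul {k j : ℕ} {b : ℕ → ℝ} (hb : StrictAntiOn b (Set.Iic k))
    (hj : j ≤ k) :
    ∏ l ∈ (range (k + 1)).erase j, (b j - b l)
      = (-1) ^ j * ∏ l ∈ (range (k + 1)).erase j, |b j - b l| := by
  have hsign : ∀ l ∈ (range (k + 1)).erase j,
      b j - b l = (if l < j then -1 else 1) * |b j - b l| := by
    intro l hl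
    obtain ⟨hlj, hlk⟩ : l ≠ j ∧ l ≤ k := by simp only [mem_erase, mem_range] at hl; omega
    split_ifs with h
    · rw [abs_of_neg (by linarith [hb (Set.mem_Iic.2 hlk) (Set.mem_Iic.2 hj) h])]; ring
    · rw [abs_of_pos (by linarith [hb (Set.mem_Iic.2 hj) (Set.mem_Iic.2 hlk) (by omega)])]; ring
  rw [prod_congr rfl hsign, prod_mul_distrib, prod_ite, prod_const, prod_const, one_pow, mul_one]
  congr 2
  rw [show ((range (k + 1)).erase j).filter (· < j) = range j by
    ext l; simp only [mem_filter, mem_erase, mem_range]; omega, card_range]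

theorem Bt_eq_sum_div_prod_sub {k : ℕ} {b : ℕ → ℝ} (hb : StrictAntiOn b (Set.Iic k)) (t : ℝ) :
    Bt t k b = (-1) ^ k * ∑ j ∈ range (k + 1),
      exp (-b j * t) / ∏ l ∈ (range (k + 1)).erase j, (b j - b l) := by
  unfold Bt
  congr 1
  refine sum_congr rfl fun j hj => ?_
  rw [prod_erase_sub_eq_neg_one_pow_mul hb (by simpa [Nat.lt_succ_iff] using hj)]
  field_simp
  rw [← pow_mul, mul_comm, pow_mul, neg_one_sq, one_pow]

theorem StrictAntiOn.comp_succ_Iic {k : ℕ} {b : ℕ → ℝ} (hb : StrictAntiOn b (Set.Iic (k + 1))) :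
    StrictAntiOn (fun j => b (j + 1)) (Set.Iic k) :=
  fun i hi j hj hij => hb (by simpa using hi) (by simpa using hj) (by omega)

theorem Bt_single_node (t : ℝ) (b : ℕ → ℝ) : Bt t 0 b = exp (-b 0 * t) := by
  simp [Bt]

theorem Bt_time_zero {k : ℕ} {b : ℕ → ℝ} (hb : StrictAntiOn b (Set.Iic (k + 1))) :
    Bt 0 (k + 1) b = 0 := by
  have hinj : Set.InjOn b (range (k + 2)) := hb.injOn.mono fun j hj => by
    simpa [Nat.lt_succ_iff] using hj
  have h := Lagrange.coeff_eq_sum hinj (P := 1) (by simp; positivity)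
  simp only [Polynomial.coeff_one, card_range, Polynomial.eval_one] at h
  rw [Bt_eq_sum_div_prod_sub hb]
  simpa using h.symm

theorem hasDerivAt_Bt {k : ℕ} {b : ℕ → ℝ} (hb : StrictAntiOn b (Set.Iic (k + 1))) (t : ℝ) :
    HasDerivAt (fun s => Bt s (k + 1) b)
      (-b 0 * Bt t (k + 1) b + Bt t k (fun j => b (j + 1))) t := by
  set P : ℕ → ℝ := fun j => ∏ l ∈ (range (k + 2)).erase j, (b j - b l)
  set Q : ℕ → ℝ := fun j => ∏ l ∈ (range (k + 1)).erase j, (b (j + 1) - b (l + 1))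
  -- dropping the node `b 0` from the product `P (j + 1)` leaves `Q j`
  have hPQ : ∀ j ∈ range (k + 1), (b 0 - b (j + 1)) / P (j + 1) = -1 / Q j := by
    intro j hj
    have hlt : b (j + 1) < b 0 :=
      hb (by simp) (by simpa [Nat.lt_succ_iff] using hj) (Nat.succ_pos j)
    simp only [P, Q, prod_range_succ_erase_succ (fun l => b (j + 1) - b l)]
    rw [← neg_sub, neg_div, neg_div, div_mul_cancel_left₀ (by linarith), one_div]
  have hsum : ∑ j ∈ range (k + 2), -b j * exp (-b j * t) / P j
      = -b 0 * ∑ j ∈ range (k + 2), exp (-b j * t) / P j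
        - ∑ j ∈ range (k + 1), exp (-b (j + 1) * t) / Q j := by
    have hsplit : ∀ j ∈ range (k + 2), -b j * exp (-b j * t) / P j
        = -b 0 * (exp (-b j * t) / P j) + (b 0 - b j) / P j * exp (-b j * t) := by
      intro j _; ring
    have htail : ∑ j ∈ range (k + 2), (b 0 - b j) / P j * exp (-b j * t)
        = -∑ j ∈ range (k + 1), exp (-b (j + 1) * t) / Q j := by
      rw [sum_range_succ', sub_self, zero_div, zero_mul, add_zero, ← sum_neg_distrib]
      refine sum_congr rfl fun j hj => ?_
      rw [hPQ j hj]
      ring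
    rw [sum_congr rfl hsplit, sum_add_distrib, ← mul_sum, htail, sub_eq_add_neg]
  have hderiv : HasDerivAt (fun s => Bt s (k + 1) b)
      ((-1) ^ (k + 1) * ∑ j ∈ range (k + 2), -b j * exp (-b j * t) / P j) t := by
    simp only [funext (Bt_eq_sum_div_prod_sub hb)]
    refine HasDerivAt.const_mul _ (HasDerivAt.fun_sum fun j _ => ?_)
    refine HasDerivAt.div_const ?_ _
    simpa [mul_comm] using ((hasDerivAt_id t).const_mul (-b j)).exp
  convert hderiv using 1
  rw [hsum, Bt_eq_sum_div_prod_sub hb, Bt_eq_sum_div_prod_sub hb.comp_succ_Iic, pow_succ]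
  ring

theorem Bt_nonneg {k : ℕ} {b : ℕ → ℝ} (hb : StrictAntiOn b (Set.Iic k)) {t : ℝ} (ht : 0 ≤ t) :
    0 ≤ Bt t k b := by
  induction k generalizing b t with
  | zero => rw [Bt_single_node]; positivity
  | succ k ih =>
    exact nonneg_of_hasDerivAt_linear (fun s _ => hasDerivAt_Bt hb s)
      (fun s hs => ih hb.comp_succ_Iic hs) (Bt_time_zero hb).ge ht

noncomputable def momentSolution (a c : ℕ → ℝ) (x : ℝ) (n : ℕ) (t : ℝ) : ℝ :=
  ∑ k ∈ range (n + 1), (∏ r ∈ Icc (n - k + 1) n, c r) * Bt t k (fun j => a (n - j)) * x ^ (n - k)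

section momentSolution

variable {a : ℕ → ℝ} (c : ℕ → ℝ) (x : ℝ)

theorem StrictMono.strictAntiOn_sub {k n : ℕ} (ha : StrictMono a) (hk : k ≤ n) :
    StrictAntiOn (fun j => a (n - j)) (Set.Iic k) :=
  fun i hi j hj hij => ha (by simp only [Set.mem_Iic] at hi hj; omega)

theorem momentSolution_eq (n : ℕ) (t : ℝ) :
    momentSolution a c x n t = exp (-a n * t) * x ^ n +
      ∑ k ∈ Icc 1 n,
        (∏ r ∈ Icc (n - k + 1) n, c r) * Bt t k (fun j => a (n - j)) * x ^ (n - k) := by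
  rw [momentSolution, Nat.range_succ_eq_Icc_zero, ← insert_Icc_add_one_left_eq_Icc n.zero_le,
    sum_insert (by simp), zero_add, Bt_single_node]
  simp

theorem momentSolution_zero_index (ha0 : a 0 = 0) (t : ℝ) : momentSolution a c x 0 t = 1 := by
  simp [momentSolution, Bt_single_node, ha0]

theorem momentSolution_time_zero (ha : StrictMono a) (n : ℕ) :
    momentSolution a c x n 0 = x ^ n := by
  rw [momentSolution, sum_range_succ', sum_eq_zero fun k hk => by
    rw [Bt_time_zero (ha.strictAntiOn_sub (mem_range.1 hk)), mul_zero, zero_mul]]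
  simp [Bt_single_node]

theorem momentSolution_succ (n : ℕ) (t : ℝ) :
    momentSolution a c x (n + 1) t = c (n + 1) * ∑ k ∈ range (n + 1),
        (∏ r ∈ Icc (n - k + 1) n, c r) * Bt t (k + 1) (fun j => a (n + 1 - j)) * x ^ (n - k)
      + exp (-a (n + 1) * t) * x ^ (n + 1) := by
  rw [momentSolution, sum_range_succ', mul_sum]
  congr 1
  · refine sum_congr rfl fun k hk => ?_
    rw [Nat.add_sub_add_right, prod_Icc_succ_top (by omega)]
    ring
  · simp [Bt_single_node]

theorem hasDerivAt_momentSolution (ha : StrictMono a) (n : ℕ) (t : ℝ) :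
    HasDerivAt (momentSolution a c x (n + 1))
      (-a (n + 1) * momentSolution a c x (n + 1) t + c (n + 1) * momentSolution a c x n t) t := by
  set P : ℕ → ℝ := fun k => ∏ r ∈ Icc (n - k + 1) n, c r
  set b : ℕ → ℝ := fun j => a (n + 1 - j)
  have hterm : ∀ k ∈ range (n + 1), HasDerivAt (fun s => P k * Bt s (k + 1) b * x ^ (n - k))
      (P k * (-a (n + 1) * Bt t (k + 1) b + Bt t k (fun j => a (n - j))) * x ^ (n - k)) t := by
    intro k hk
    have hB := hasDerivAt_Bt (ha.strictAntiOn_sub (n := n + 1) (k := k + 1) (by simpa using hk)) t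
    simp only [Nat.add_sub_add_right, Nat.sub_zero] at hB
    exact (hB.const_mul _).mul_const _
  have hexp : HasDerivAt (fun s => exp (-a (n + 1) * s) * x ^ (n + 1))
      (-a (n + 1) * exp (-a (n + 1) * t) * x ^ (n + 1)) t := by
    simpa [mul_comm] using (((hasDerivAt_id t).const_mul (-a (n + 1))).exp.mul_const (x ^ (n + 1)))
  have hsplit : ∑ k ∈ range (n + 1),
        P k * (-a (n + 1) * Bt t (k + 1) b + Bt t k (fun j => a (n - j))) * x ^ (n - k)
      = -a (n + 1) * ∑ k ∈ range (n + 1), P k * Bt t (k + 1) b * x ^ (n - k)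
        + momentSolution a c x n t := by
    rw [momentSolution, mul_sum, ← sum_add_distrib]
    exact sum_congr rfl fun k _ => by ring
  rw [funext (momentSolution_succ c x n)]
  refine (((HasDerivAt.fun_sum hterm).const_mul (c (n + 1))).add hexp).congr_deriv ?_
  rw [hsplit]
  beta_reduce
  ring

theorem eq_momentSolution_of_hasDerivAt (ha : StrictMono a) (ha0 : a 0 = 0) {m : ℕ → ℝ → ℝ}
    (h0 : ∀ t, 0 ≤ t → m 0 t = 1) (hinit : ∀ n, m n 0 = x ^ n)
    (hode : ∀ n, 1 ≤ n → ∀ t, 0 ≤ t → HasDerivAt (m n) (-a n * m n t + c n * m (n - 1) t) t)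
    (n : ℕ) {t : ℝ} (ht : 0 ≤ t) : m n t = momentSolution a c x n t := by
  induction n generalizing t with
  | zero => rw [h0 t ht, momentSolution_zero_index c x ha0]
  | succ n ih =>
    refine eq_of_hasDerivAt_linear (g := fun s => c (n + 1) * m n s)
      (fun s hs => hode _ le_add_self s hs)
      (fun s hs => ?_) (by rw [hinit, momentSolution_time_zero c x ha]) ht
    rw [ih hs]
    exact hasDerivAt_momentSolution c x ha n s

end momentSolution

theorem aC_zero (δ δ' : ℝ) : aC δ δ' 0 = 0 := by
  simp [aC]

theorem aC_strictMono {δ δ' : ℝ} (h : 0 < δ + δ') : StrictMono (aC δ δ') :=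
  strictMono_nat_of_lt_succ fun n => by
    simp only [aC, Nat.cast_add, Nat.cast_one]
    nlinarith [n.cast_nonneg (α := ℝ)]

theorem cC_nonneg {γ : ℝ} (hγ : 0 ≤ γ) (r : ℕ) : 0 ≤ cC γ r := by
  rcases r with _ | r
  · simp [cC]
  · simp only [cC, Nat.cast_add, Nat.cast_one]
    nlinarith [r.cast_nonneg (α := ℝ)]

theorem stmt1 (δ δ' : ℝ) (hδ : 2 ≤ δ) (hδ' : 2 ≤ δ') (x : ℝ)
    (m : ℕ → ℝ → ℝ)
    (h0 : ∀ t : ℝ, 0 ≤ t → m 0 t = 1)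
    (hinit : ∀ n : ℕ, m n 0 = x ^ n)
    (hode : ∀ n : ℕ, 1 ≤ n → ∀ t : ℝ, 0 ≤ t →
      HasDerivAt (m n) (-(aC δ δ' n) * m n t + cC δ' n * m (n - 1) t) t) :
    ∀ n : ℕ, ∀ t : ℝ, 0 ≤ t →
      (m n t = Real.exp (-(aC δ δ' n) * t) * x ^ n +
          ∑ k ∈ Finset.Icc 1 n,
            (∏ r ∈ Finset.Icc (n - k + 1) n, cC δ' r) *
              Bt t k (fun j => aC δ δ' (n - j)) * x ^ (n - k)) ∧
      (∀ k ∈ Finset.Icc 1 n,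
        0 ≤ (∏ r ∈ Finset.Icc (n - k + 1) n, cC δ' r) * Bt t k (fun j => aC δ δ' (n - j))) := by
  have ha : StrictMono (aC δ δ') := aC_strictMono (by linarith)
  intro n t ht
  refine ⟨?_, fun k hk => ?_⟩
  · rw [eq_momentSolution_of_hasDerivAt (cC δ') x ha (aC_zero δ δ') h0 hinit hode n ht,
      momentSolution_eq]
  · exact mul_nonneg (prod_nonneg fun r _ => cC_nonneg (by linarith) r)
      (Bt_nonneg (ha.strictAntiOn_sub (mem_Icc.1 hk).2) ht)
end

section
/- Let δ, δ' ≥ 2 be real numbers. For all integers n, p, i, j with 0 ≤ i ≤ n and 0 ≤ j ≤ p, the following identity holds: B(i+δ'/2, j+δ/2) / B(n+δ'/2, p+δ/2) = [C(i+j, j) · Π_{m=i+j+1}^{n+p} a_m] / [C(n+p, p) · (Π_{r=i+1}^{n} c_r(δ')) · (Π_{s=j+1}^{p} c_s(δ))], where C(m,k) denotes the binomial coefficient and an empty product equals 1 (in particular the quotient equals 1 when (i,j) = (n,p)). -/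
open Finset Real

/-- Euler Beta function `B(a,b) = Γ(a)Γ(b)/Γ(a+b)`. -/
noncomputable def Beta (a b : ℝ) : ℝ := Real.Gamma a * Real.Gamma b / Real.Gamma (a + b)

/-!
Since `c_r(γ) = 2 r (r - 1 + γ/2)`, the functional equation `Γ(x + 1) = x Γ(x)` telescopes
`∏_{r=i+1}^{n} c_r(γ)` into `2^(n-i) (n!/i!) Γ(n + γ/2) / Γ(i + γ/2)`. As `a_m = c_m(δ + δ')`, all
three products are of this form, and the factorials they produce cancel against the binomial
coefficients `C(i+j, j) = (i+j)!/(i! j!)`, leaving exactly the quotient of Beta values.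
-/

open Nat

theorem aC_eq_cC_add (δ δ' : ℝ) : aC δ δ' = cC (δ + δ') := by
  funext n
  simp only [aC, cC]
  ring

theorem cC_eq_two_mul (γ : ℝ) (r : ℕ) : cC γ (r + 1) = 2 * ((r + 1 : ℕ) * ((r : ℝ) + γ / 2)) := by
  simp only [cC]
  push_cast
  ring

theorem factorial_mul_Gamma_mul_prod_cC {γ : ℝ} (hγ : 0 < γ) (i k : ℕ) :
    (i ! : ℝ) * Gamma (i + γ / 2) * ∏ r ∈ Icc (i + 1) (i + k), cC γ r
      = 2 ^ k * (i + k)! * Gamma ((i + k : ℕ) + γ / 2) := by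
  induction k with
  | zero => simp
  | succ k ih =>
    have hne : ((i + k : ℕ) : ℝ) + γ / 2 ≠ 0 := by positivity
    rw [← add_assoc, prod_Icc_succ_top (by omega), ← mul_assoc, ih, cC_eq_two_mul,
      factorial_succ,
      show ((i + k + 1 : ℕ) : ℝ) + γ / 2 = (i + k : ℕ) + γ / 2 + 1 by push_cast; ring,
      Gamma_add_one hne]
    push_cast
    ring

theorem prod_Icc_cC_eq_div {γ : ℝ} (hγ : 0 < γ) (i k : ℕ) :
    ∏ r ∈ Icc (i + 1) (i + k), cC γ r
      = 2 ^ k * (i + k)! * Gamma ((i + k : ℕ) + γ / 2) / (i ! * Gamma (i + γ / 2)) := by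
  rw [← factorial_mul_Gamma_mul_prod_cC hγ, mul_div_cancel_left₀]
  have := Gamma_pos_of_pos (by positivity : (0 : ℝ) < i + γ / 2)
  positivity

theorem stmt3 (δ δ' : ℝ) (hδ : 2 ≤ δ) (hδ' : 2 ≤ δ')
    (n p i j : ℕ) (hi : i ≤ n) (hj : j ≤ p) :
    Beta ((i : ℝ) + δ' / 2) ((j : ℝ) + δ / 2) / Beta ((n : ℝ) + δ' / 2) ((p : ℝ) + δ / 2)
      = (((i + j).choose j : ℝ) * ∏ m ∈ Finset.Icc (i + j + 1) (n + p), aC δ δ' m) /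
          (((n + p).choose p : ℝ) * (∏ r ∈ Finset.Icc (i + 1) n, cC δ' r) *
            (∏ s ∈ Finset.Icc (j + 1) p, cC δ s)) := by
  obtain ⟨k, rfl⟩ := Nat.exists_eq_add_of_le hi
  obtain ⟨l, rfl⟩ := Nat.exists_eq_add_of_le hj
  have hsum : ∀ a b : ℕ, (a : ℝ) + δ' / 2 + (b + δ / 2) = (a + b : ℕ) + (δ + δ') / 2 := by
    intro a b; push_cast; ring
  rw [Beta, Beta, hsum, hsum, ← choose_symm_add, cast_add_choose, ← choose_symm_add,
    cast_add_choose, show i + k + (j + l) = i + j + (k + l) by ring, aC_eq_cC_add,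
    prod_Icc_cC_eq_div (by linarith) i k, prod_Icc_cC_eq_div (by linarith) j l,
    prod_Icc_cC_eq_div (by linarith) (i + j) (k + l)]
  field_simp
  ring
end

section
/- Let k ≥ 0 be an integer and let b' > b_0 > b_1 > … > b_k be strictly decreasing real numbers. Then for all t ≥ 0: B_t(b', b_0, b_1, …, b_k) = e^{−b' t} ∫_0^t e^{b' s} B_s(b_0, b_1, …, b_k) ds. -/
/-!
For decreasing nodes, `(-1)^j / ∏_{l ≠ j} |b_j - b_l| = ∏_{l ≠ j} (b_j - b_l)⁻¹ =: w_j` is the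
nodal weight, so `B_t(b_0, …, b_k) = (-1)^k ∑_j w_j e^{-b_j t}` is, up to sign, the divided
difference of `x ↦ e^{-xt}`. Integrating term by term,
`e^{-b't} ∫_0^t e^{b's} ∑_j w_j e^{-b_j s} ds = ∑_j w_j (e^{-b_j t} - e^{-b't}) / (b' - b_j)`.
Adding the node `b'` turns `w_j` into `w_j / (b_j - b')`, and gives `b'` the weight
`∏_j (b' - b_j)⁻¹ = ∑_j w_j / (b' - b_j)` (partial fractions, i.e. Lagrange interpolation of `1`),
which is exactly the coefficient of `e^{-b't}` above.
-/

open Finset Real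

namespace Lagrange

variable {F ι κ : Type*} [Field F] [DecidableEq ι] {s : Finset ι} {v : ι → F} {a i : ι}

theorem nodalWeight_insert_of_mem (ha : a ∉ s) (hi : i ∈ s) :
    nodalWeight (insert a s) v i = nodalWeight s v i * (v i - v a)⁻¹ := by
  rw [nodalWeight, erase_insert_of_ne (ne_of_mem_of_not_mem hi ha).symm,
    prod_insert (fun h => ha (mem_of_mem_erase h)), mul_comm, nodalWeight]

theorem nodalWeight_insert_self (ha : a ∉ s) (hv : Set.InjOn v (insert a s : Finset ι))
    (hs : s.Nonempty) :
    nodalWeight (insert a s) v a = ∑ i ∈ s, nodalWeight s v i * (v a - v i)⁻¹ := by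
  have hva : ∀ i ∈ s, v a ≠ v i := fun i hi h =>
    ha (hv.eq_iff (by simp) (by simp [hi]) |>.mp h ▸ hi)
  have h := eval_interpolate_not_at_node (1 : ι → F) hva
  rw [interpolate_one (hv.mono (by simp)) hs, Polynomial.eval_one] at h
  simp only [Pi.one_apply, mul_one] at h
  rw [nodalWeight_eq_eval_nodal_erase_inv, erase_insert ha, eq_comm]
  exact eq_inv_of_mul_eq_one_right h.symm

variable [DecidableEq κ]

theorem nodalWeight_map (e : ι ↪ κ) (v : κ → F) (i : ι) :
    nodalWeight (s.map e) v (e i) = nodalWeight s (v ∘ e) i := by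
  rw [nodalWeight, ← map_erase, prod_map, nodalWeight]
  rfl

end Lagrange

open Lagrange

theorem integral_exp_mul {c : ℝ} (hc : c ≠ 0) (a b : ℝ) :
    ∫ x in a..b, exp (c * x) = c⁻¹ * (exp (c * b) - exp (c * a)) := by
  rw [intervalIntegral.integral_comp_mul_left (fun x => exp x) hc, integral_exp, smul_eq_mul]

section ExpDivDiff

variable {ι : Type*} [DecidableEq ι]

/-- The divided difference of `x ↦ exp (-x * t)` at the nodes `v i`, `i ∈ s`. -/
noncomputable def expDivDiff (s : Finset ι) (v : ι → ℝ) (t : ℝ) : ℝ :=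
  ∑ i ∈ s, nodalWeight s v i * exp (-(v i) * t)

theorem expDivDiff_map {κ : Type*} [DecidableEq κ] (s : Finset ι) (e : ι ↪ κ) (v : κ → ℝ)
    (t : ℝ) : expDivDiff (s.map e) v t = expDivDiff s (v ∘ e) t := by
  simp only [expDivDiff, sum_map, nodalWeight_map, Function.comp_apply]

theorem exp_mul_integral_exp_mul_expDivDiff {s : Finset ι} {v : ι → ℝ} {a : ι} (ha : a ∉ s)
    (hv : Set.InjOn v (insert a s : Finset ι)) (hs : s.Nonempty) (t : ℝ) :
    exp (-(v a) * t) * ∫ x in (0 : ℝ)..t, exp (v a * x) * expDivDiff s v x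
      = -expDivDiff (insert a s) v t := by
  have hva : ∀ i ∈ s, v a - v i ≠ 0 := fun i hi h =>
    ha (hv.eq_iff (by simp) (by simp [hi]) |>.mp (sub_eq_zero.mp h) ▸ hi)
  have hintegrand : ∀ x, exp (v a * x) * expDivDiff s v x
      = ∑ i ∈ s, nodalWeight s v i * exp ((v a - v i) * x) := fun x => by
    rw [expDivDiff, mul_sum]
    refine sum_congr rfl fun i _ => ?_
    rw [sub_mul, sub_eq_add_neg, exp_add, ← neg_mul]
    ring
  simp_rw [hintegrand]
  rw [intervalIntegral.integral_finsetSum fun i _ =>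
    (by fun_prop : Continuous _).intervalIntegrable 0 t]
  simp_rw [intervalIntegral.integral_const_mul]
  rw [expDivDiff, sum_insert ha, nodalWeight_insert_self ha hv hs, mul_sum, sum_mul,
    ← sum_add_distrib, ← sum_neg_distrib]
  refine sum_congr rfl fun i hi => ?_
  rw [integral_exp_mul (hva i hi), mul_zero, exp_zero, nodalWeight_insert_of_mem ha hi,
    ← neg_sub (v a) (v i), inv_neg]
  have hexp : exp (-(v a) * t) * exp ((v a - v i) * t) = exp (-(v i) * t) := by
    rw [← exp_add]; ring_nf
  linear_combination (nodalWeight s v i * (v a - v i)⁻¹) * hexp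

end ExpDivDiff

theorem prod_erase_sub_eq_neg_one_pow_mul_prod_abs {b : ℕ → ℝ} {k j : ℕ}
    (hb : StrictAntiOn b (Set.Iic k)) (hj : j ≤ k) :
    ∏ l ∈ (range (k + 1)).erase j, (b j - b l)
      = (-1) ^ j * ∏ l ∈ (range (k + 1)).erase j, |b j - b l| := by
  have hfactor : ∀ l ∈ (range (k + 1)).erase j,
      b j - b l = (if l < j then -1 else 1) * |b j - b l| := by
    intro l hl
    obtain ⟨hlj, hl⟩ := mem_erase.mp hl
    have hlk : l ≤ k := Nat.lt_succ_iff.mp (mem_range.mp hl)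
    rcases lt_or_gt_of_ne hlj with hlt | hgt
    · rw [if_pos hlt, abs_of_neg (sub_neg.mpr (hb hlk hj hlt)), neg_one_mul, neg_neg]
    · rw [if_neg hgt.not_gt, abs_of_pos (sub_pos.mpr (hb hj hlk hgt)), one_mul]
  have hbelow : ((range (k + 1)).erase j).filter (· < j) = range j := by
    ext l
    simp only [mem_filter, mem_erase, mem_range]
    omega
  rw [prod_congr rfl hfactor, prod_mul_distrib, prod_ite, prod_const, prod_const, one_pow,
    mul_one, hbelow, card_range]

theorem Bt_eq_neg_one_pow_mul_expDivDiff {b : ℕ → ℝ} {k : ℕ} (hb : StrictAntiOn b (Set.Iic k))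
    (t : ℝ) : Bt t k b = (-1) ^ k * expDivDiff (range (k + 1)) b t := by
  rw [Bt, expDivDiff]
  congr 1
  refine sum_congr rfl fun j hj => ?_
  rw [nodalWeight, prod_inv_distrib,
    prod_erase_sub_eq_neg_one_pow_mul_prod_abs hb (Nat.lt_succ_iff.mp (mem_range.mp hj)),
    mul_inv, ← inv_pow, inv_neg, inv_one, div_eq_mul_inv]
  ring

theorem stmt6_general (k : ℕ) (b : ℕ → ℝ) (hb : ∀ m : ℕ, m ≤ k → b (m + 1) < b m)
    (t : ℝ) :
    Bt t (k + 1) b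
      = Real.exp (-(b 0) * t) * ∫ s in (0 : ℝ)..t, Real.exp (b 0 * s) * Bt s k (fun j => b (j + 1)) := by
  have hanti : StrictAntiOn b (Set.Iic (k + 1)) :=
    strictAntiOn_Iic_of_succ_lt fun m hm => hb m (Nat.lt_succ_iff.mp hm)
  have hanti_succ : StrictAntiOn (fun j => b (j + 1)) (Set.Iic k) :=
    strictAntiOn_Iic_of_succ_lt fun m hm => hb (m + 1) hm
  have hnodes : range (k + 2) = insert 0 ((range (k + 1)).map (addRightEmbedding 1)) := by
    rw [range_add_one']; rfl
  have hinj : Set.InjOn b (range (k + 2) : Finset ℕ) :=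
    hanti.injOn.mono fun l hl => Nat.lt_succ_iff.mp (mem_range.mp hl)
  rw [hnodes] at hinj
  have hshift : ∀ x, expDivDiff (range (k + 1)) (fun j => b (j + 1)) x
      = expDivDiff ((range (k + 1)).map (addRightEmbedding 1)) b x :=
    fun x => by rw [expDivDiff_map]; rfl
  rw [Bt_eq_neg_one_pow_mul_expDivDiff hanti, hnodes]
  simp_rw [Bt_eq_neg_one_pow_mul_expDivDiff hanti_succ, hshift, mul_left_comm (exp _)]
  rw [intervalIntegral.integral_const_mul, mul_left_comm,
    exp_mul_integral_exp_mul_expDivDiff (by simp) hinj (by simp)]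
  ring

/-- Here `b 0` plays the role of `b'` and `b 1, …, b (k+1)` the roles of `b_0, …, b_k`. -/
theorem stmt6 (k : ℕ) (b : ℕ → ℝ) (hb : ∀ m : ℕ, m ≤ k → b (m + 1) < b m)
    (t : ℝ) (ht : 0 ≤ t) :
    Bt t (k + 1) b
      = Real.exp (-(b 0) * t) * ∫ s in (0 : ℝ)..t, Real.exp (b 0 * s) * Bt s k (fun j => b (j + 1)) :=
  stmt6_general k b hb t
end
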